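/- arXiv:2008.08244 — 4 statements merged into one kernel-verified Lean document; each statement's English description precedes it below -/
import Mathlib

section
/- Let x_1,…,x_n ∈ ℝ and let π* be a probability measure on ℝ satisfying the first-order condition (1/n) ∑_{i=1}^n φ(x_i − θ)/p_{π*}(x_i) ≤ 1 for all θ ∈ ℝ. Then π* is a global maximizer of the mixture likelihood: ∑_{i=1}^n log p_{π*}(x_i) ≥ ∑_{i=1}^n log p_π(x_i) for every probability measure π on ℝ. -/
/-!
Since `log t ≤ t - 1`, the log-likelihood gap `∑ᵢ log (p_π(xᵢ) / p_{π*}(xᵢ))` is at most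
`∑ᵢ p_π(xᵢ) / p_{π*}(xᵢ) - n`. By Fubini that sum of ratios is the `π`-average of
`θ ↦ ∑ᵢ φ(xᵢ - θ) / p_{π*}(xᵢ)`, which the first-order condition bounds by `n`.
-/

open MeasureTheory Set

/-- The standard normal density `φ(x) = (2π)^{-1/2} exp(-x²/2)`. -/
noncomputable def gaussPDF (x : ℝ) : ℝ := (Real.sqrt (2 * Real.pi))⁻¹ * Real.exp (-x ^ 2 / 2)

/-- Gaussian location mixture density `p_ρ(x) = ∫ φ(x - θ) dρ(θ)`. -/
noncomputable def gmix (ρ : Measure ℝ) (x : ℝ) : ℝ := ∫ θ, gaussPDF (x - θ) ∂ρ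

lemma gaussPDF_pos (x : ℝ) : 0 < gaussPDF x := by
  unfold gaussPDF
  positivity

lemma gaussPDF_le_inv_sqrt (x : ℝ) : gaussPDF x ≤ (Real.sqrt (2 * Real.pi))⁻¹ := by
  refine mul_le_of_le_one_right (by positivity) (Real.exp_le_one_iff.2 ?_)
  nlinarith [sq_nonneg x]

lemma measurable_gaussPDF : Measurable gaussPDF := by
  unfold gaussPDF
  fun_prop

lemma integrable_gaussPDF_sub (ρ : Measure ℝ) [IsFiniteMeasure ρ] (a : ℝ) :
    Integrable (fun θ ↦ gaussPDF (a - θ)) ρ := by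
  refine .of_bound (measurable_gaussPDF.comp (by fun_prop)).aestronglyMeasurable
    (Real.sqrt (2 * Real.pi))⁻¹ (.of_forall fun θ ↦ ?_)
  rw [Real.norm_of_nonneg (gaussPDF_pos _).le]
  exact gaussPDF_le_inv_sqrt _

lemma gmix_pos (ρ : Measure ℝ) [IsFiniteMeasure ρ] [NeZero ρ] (a : ℝ) : 0 < gmix ρ a := by
  rw [gmix, integral_pos_iff_support_of_nonneg (fun θ ↦ (gaussPDF_pos _).le)
    (integrable_gaussPDF_sub ρ a)]
  have : Function.support (fun θ ↦ gaussPDF (a - θ)) = univ :=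
    Function.support_eq_univ fun θ ↦ (gaussPDF_pos _).ne'
  simp [this, NeZero.ne ρ]

lemma sum_gmix_div_le {ι : Type*} [Fintype ι] (ρ : Measure ℝ) [IsProbabilityMeasure ρ]
    (x c : ι → ℝ) {C : ℝ} (h : ∀ θ, ∑ i, gaussPDF (x i - θ) / c i ≤ C) :
    ∑ i, gmix ρ (x i) / c i ≤ C := by
  have hint : ∀ i, Integrable (fun θ ↦ gaussPDF (x i - θ) / c i) ρ :=
    fun i ↦ (integrable_gaussPDF_sub ρ (x i)).div_const _
  calc ∑ i, gmix ρ (x i) / c i = ∫ θ, ∑ i, gaussPDF (x i - θ) / c i ∂ρ := by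
        rw [integral_finsetSum _ fun i _ ↦ hint i]
        exact Finset.sum_congr rfl fun i _ ↦ (integral_div _ _).symm
    _ ≤ ∫ _, C ∂ρ :=
        integral_mono (integrable_finsetSum _ fun i _ ↦ hint i) (integrable_const _) h
    _ = C := by simp

lemma sum_log_le_sum_log_of_sum_div_le_card {ι : Type*} [Fintype ι] {p q : ι → ℝ}
    (hp : ∀ i, 0 < p i) (hq : ∀ i, 0 < q i) (h : ∑ i, p i / q i ≤ Fintype.card ι) :
    ∑ i, Real.log (p i) ≤ ∑ i, Real.log (q i) := by
  have hgap : ∀ i, Real.log (p i) - Real.log (q i) ≤ p i / q i - 1 := fun i ↦ by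
    rw [← Real.log_div (hp i).ne' (hq i).ne']
    exact Real.log_le_sub_one_of_pos (div_pos (hp i) (hq i))
  have := Finset.sum_le_sum fun i (_ : i ∈ Finset.univ) ↦ hgap i
  simp only [Finset.sum_sub_distrib, Finset.sum_const, Finset.card_univ, nsmul_eq_mul,
    mul_one] at this
  linarith

theorem stmt3_general (n : ℕ) (x : Fin n → ℝ) (ρs : Measure ℝ)
    (hρs : IsProbabilityMeasure ρs)
    (hfoc : ∀ θ : ℝ, (1 / n : ℝ) * ∑ i, gaussPDF (x i - θ) / gmix ρs (x i) ≤ 1) :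
    ∀ ρ : Measure ℝ, IsProbabilityMeasure ρ →
      ∑ i, Real.log (gmix ρ (x i)) ≤ ∑ i, Real.log (gmix ρs (x i)) := by
  intro ρ hρ
  have hfoc' : ∀ θ : ℝ, ∑ i, gaussPDF (x i - θ) / gmix ρs (x i) ≤ n := by
    intro θ
    rcases n.eq_zero_or_pos with rfl | hn
    · simp
    · have := hfoc θ
      rwa [one_div, inv_mul_le_iff₀ (by positivity), mul_one] at this
  refine sum_log_le_sum_log_of_sum_div_le_card (fun i ↦ gmix_pos ρ _) (fun i ↦ gmix_pos ρs _) ?_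
  simpa using sum_gmix_div_le ρ x (fun i ↦ gmix ρs (x i)) hfoc'

/-- The first-order condition is sufficient for global optimality:
if `(1/n) ∑_i φ(x_i - θ)/p_ρs(x_i) ≤ 1` for all `θ`, then `ρs` maximizes the
mixture likelihood over all probability measures. -/
theorem stmt3 (n : ℕ) (hn : 1 ≤ n) (x : Fin n → ℝ) (ρs : Measure ℝ)
    (hρs : IsProbabilityMeasure ρs)
    (hfoc : ∀ θ : ℝ, (1 / n : ℝ) * ∑ i, gaussPDF (x i - θ) / gmix ρs (x i) ≤ 1) :
    ∀ ρ : Measure ℝ, IsProbabilityMeasure ρ →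
      ∑ i, Real.log (gmix ρ (x i)) ≤ ∑ i, Real.log (gmix ρs (x i)) :=
  stmt3_general n x ρs hρs hfoc
end

section
/- Let 0 < r < r2 < r1 and let f be a holomorphic function on the open disk {z ∈ ℂ : |z| < r1}, not identically zero, with M_f(r1) = sup_{|z| < r1} |f(z)| < ∞ and M_f(r2) = sup_{|z| < r2} |f(z)|. Then f has finitely many zeros in the closed disk {|z| ≤ r}, and their number n_f(r), counted with multiplicity (the sum over these zeros of the order of vanishing of f), satisfies n_f(r) ≤ log(M_f(r1)/M_f(r2)) / log((r1² + r2·r)/(r1·(r2 + r))). -/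
/-!
Let `z` run over the zeros of `f` in the closed disk of radius `r`, with multiplicities `m z`,
and `N = ∑ m z`. Dividing `f` by `∏ (w - z) ^ m z` and multiplying by the Blaschke denominators
`∏ ((r1² - z̄ w) / r1) ^ m z` gives a holomorphic `h` on the disk of radius `r1`; on circles of
radius `ρ → r1` every factor `(r1² - z̄ w) / (r1 (w - z))` has modulus tending to `1`, so the
maximum principle gives `‖h‖ ≤ M1`. On the disk of radius `r2` each Blaschke factor
`r1 (w - z) / (r1² - z̄ w)` has modulus at most `1 / Q` with `Q = (r1² + r2 r) / (r1 (r2 + r))`,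
hence `M2 ≤ M1 / Q ^ N`, i.e. `N log Q ≤ log (M1 / M2)`.
-/

open Set

/-- Order of vanishing of `f` at `z`: the smallest `k` such that the `k`-th
Taylor coefficient (equivalently, the `k`-th iterated derivative) of `f` at `z`
is nonzero. -/
noncomputable def vanishOrder (f : ℂ → ℂ) (z : ℂ) : ℕ :=
  sInf {k : ℕ | iteratedDeriv k f z ≠ 0}

open Complex ComplexConjugate Filter Metric Topology

theorem norm_sq_sub_conj_mul (R : ℝ) (z w : ℂ) :
    ‖(R : ℂ) ^ 2 - conj z * w‖ ^ 2 =
      R ^ 2 * ‖w - z‖ ^ 2 + (R ^ 2 - ‖z‖ ^ 2) * (R ^ 2 - ‖w‖ ^ 2) := by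
  rw [← ofReal_pow]
  simp only [← normSq_eq_norm_sq, normSq_apply, sub_re, sub_im, ofReal_re, ofReal_im, mul_re,
    mul_im, conj_re, conj_im]
  ring

section PseudoHyperbolic

variable {R : ℝ} {z w : ℂ}

/- With `a = ‖z‖`, `b = ‖w‖`, the two estimates below come from `norm_sq_sub_conj_mul` and
`(R² ± a b)² - (R² - a²) (R² - b²) = R² (a ± b)²`. -/
theorem norm_sub_mul_le_mul_norm_sub_conj_mul (hR : 0 < R) (hz : ‖z‖ ≤ R) (hw : ‖w‖ ≤ R) :
    (R ^ 2 + ‖z‖ * ‖w‖) * ‖w - z‖ ≤ (‖z‖ + ‖w‖) * ‖(R : ℂ) ^ 2 - conj z * w‖ := by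
  have hid := norm_sq_sub_conj_mul R z w
  have hD : ‖(R : ℂ) ^ 2 - conj z * w‖ ≤ R ^ 2 + ‖z‖ * ‖w‖ := by
    calc _ ≤ ‖(R : ℂ) ^ 2‖ + ‖conj z * w‖ := norm_sub_le _ _
      _ = R ^ 2 + ‖z‖ * ‖w‖ := by simp
  have hz0 := norm_nonneg z
  have hw0 := norm_nonneg w
  have hX : 0 ≤ (R ^ 2 - ‖z‖ ^ 2) * (R ^ 2 - ‖w‖ ^ 2) := by
    apply mul_nonneg <;> nlinarith
  refine pow_le_pow_iff_left₀ (by positivity) (by positivity) two_ne_zero |>.mp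
    (le_of_mul_le_mul_left ?_ (by positivity : (0 : ℝ) < R ^ 2))
  nlinarith [mul_le_mul_of_nonneg_left (pow_le_pow_left₀ (norm_nonneg _) hD 2) hX]

theorem sub_mul_norm_sub_conj_mul_le (hR : 0 < R) (hz : ‖z‖ ≤ R) (hw : ‖w‖ ≤ R) :
    (‖w‖ - ‖z‖) * ‖(R : ℂ) ^ 2 - conj z * w‖ ≤ (R ^ 2 - ‖z‖ * ‖w‖) * ‖w - z‖ := by
  have hid := norm_sq_sub_conj_mul R z w
  have hD : R ^ 2 - ‖z‖ * ‖w‖ ≤ ‖(R : ℂ) ^ 2 - conj z * w‖ := by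
    calc _ = ‖(R : ℂ) ^ 2‖ - ‖conj z * w‖ := by simp
      _ ≤ _ := norm_sub_norm_le _ _
  have hz0 := norm_nonneg z
  have hw0 := norm_nonneg w
  have hRzw : 0 ≤ R ^ 2 - ‖z‖ * ‖w‖ := by nlinarith
  rcases le_or_gt ‖w‖ ‖z‖ with hwz | hzw
  · nlinarith [norm_nonneg ((R : ℂ) ^ 2 - conj z * w), norm_nonneg (w - z)]
  have hX : 0 ≤ (R ^ 2 - ‖z‖ ^ 2) * (R ^ 2 - ‖w‖ ^ 2) := by
    apply mul_nonneg <;> nlinarith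
  refine pow_le_pow_iff_left₀ (by nlinarith [norm_nonneg ((R : ℂ) ^ 2 - conj z * w)])
    (by positivity) two_ne_zero |>.mp
    (le_of_mul_le_mul_left ?_ (by positivity : (0 : ℝ) < R ^ 2))
  nlinarith [mul_le_mul_of_nonneg_left (pow_le_pow_left₀ hRzw hD 2) hX]

end PseudoHyperbolic

/-- The Blaschke factor of the disk of radius `R` with zero `z` is `(w - z) / blaschkeDen R z w`;
it has modulus `1` on the circle of radius `R`. -/
noncomputable def blaschkeDen (R : ℝ) (z w : ℂ) : ℂ := ((R : ℂ) ^ 2 - conj z * w) / R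

section BlaschkeDen

variable {R r : ℝ} {z w : ℂ}

theorem norm_blaschkeDen (hR : 0 < R) (z w : ℂ) :
    ‖blaschkeDen R z w‖ = ‖(R : ℂ) ^ 2 - conj z * w‖ / R := by
  rw [blaschkeDen, norm_div, norm_real, Real.norm_of_nonneg hR.le]

theorem differentiable_prod_blaschkeDen (R : ℝ) (S : Finset ℂ) (m : ℂ → ℕ) :
    Differentiable ℂ fun w => ∏ z ∈ S, blaschkeDen R z w ^ m z := by
  unfold blaschkeDen
  fun_prop

theorem mul_norm_sub_le_norm_blaschkeDen {s : ℝ} (hr : 0 < r) (hrR : r ≤ R) (hsR : s ≤ R)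
    (hz : ‖z‖ ≤ r) (hw : ‖w‖ ≤ s) :
    (R ^ 2 + s * r) / (R * (s + r)) * ‖w - z‖ ≤ ‖blaschkeDen R z w‖ := by
  have hR : 0 < R := hr.trans_le hrR
  have hs : 0 ≤ s := (norm_nonneg w).trans hw
  have hsharp := norm_sub_mul_le_mul_norm_sub_conj_mul hR (hz.trans hrR) (hw.trans hsR)
  have hmono : (‖z‖ + ‖w‖) * (R ^ 2 + s * r) ≤ (s + r) * (R ^ 2 + ‖z‖ * ‖w‖) := by
    have h1 : 0 ≤ R ^ 2 - ‖z‖ * r := by nlinarith [norm_nonneg z]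
    have h2 : 0 ≤ R ^ 2 - ‖w‖ * s := by nlinarith [norm_nonneg w]
    nlinarith [mul_nonneg (sub_nonneg.2 hw) h1, mul_nonneg (sub_nonneg.2 hz) h2]
  have key : (R ^ 2 + s * r) * ‖w - z‖ ≤ (s + r) * ‖(R : ℂ) ^ 2 - conj z * w‖ := by
    refine le_of_mul_le_mul_left ?_ (by positivity : 0 < R ^ 2 + ‖z‖ * ‖w‖)
    nlinarith [mul_le_mul_of_nonneg_left hsharp (by positivity : 0 ≤ R ^ 2 + s * r),
      mul_le_mul_of_nonneg_right hmono (norm_nonneg ((R : ℂ) ^ 2 - conj z * w))]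
  rw [norm_blaschkeDen hR, div_mul_eq_mul_div, div_le_div_iff₀ (by positivity) hR]
  nlinarith [mul_le_mul_of_nonneg_right key hR.le]

theorem mul_norm_blaschkeDen_le_norm_sub {ρ : ℝ} (hrρ : r < ρ) (hρR : ρ ≤ R)
    (hz : ‖z‖ ≤ r) (hw : ‖w‖ = ρ) :
    R * (ρ - r) / (R ^ 2 - r * ρ) * ‖blaschkeDen R z w‖ ≤ ‖w - z‖ := by
  have hr : 0 ≤ r := (norm_nonneg z).trans hz
  have hρ : 0 < ρ := hr.trans_lt hrρ
  have hR : 0 < R := hρ.trans_le hρR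
  have hsharp := sub_mul_norm_sub_conj_mul_le hR (hz.trans (hrρ.le.trans hρR)) (hw ▸ hρR)
  rw [hw] at hsharp
  have hden : 0 < R ^ 2 - r * ρ := by nlinarith
  have hmono : (ρ - r) * (R ^ 2 - ‖z‖ * ρ) ≤ (ρ - ‖z‖) * (R ^ 2 - r * ρ) := by
    nlinarith [mul_nonneg (sub_nonneg.2 hz) (by nlinarith : 0 ≤ R ^ 2 - ρ ^ 2)]
  have key : (ρ - r) * ‖(R : ℂ) ^ 2 - conj z * w‖ ≤ (R ^ 2 - r * ρ) * ‖w - z‖ := by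
    refine le_of_mul_le_mul_left ?_ (by nlinarith : 0 < R ^ 2 - ‖z‖ * ρ)
    nlinarith [norm_nonneg (w - z), norm_nonneg ((R : ℂ) ^ 2 - conj z * w)]
  rw [norm_blaschkeDen hR, mul_div_assoc', div_mul_eq_mul_div, div_div,
    div_le_iff₀ (by positivity)]
  nlinarith [mul_le_mul_of_nonneg_left key hR.le]

end BlaschkeDen

theorem pow_sum_mul_norm_prod_pow_le {ι 𝕜 : Type*} [NormedField 𝕜] (S : Finset ι) (m : ι → ℕ)
    {u v : ι → 𝕜} {c : ℝ} (hc : 0 ≤ c) (h : ∀ i ∈ S, c * ‖u i‖ ≤ ‖v i‖) :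
    c ^ (∑ i ∈ S, m i) * ‖∏ i ∈ S, u i ^ m i‖ ≤ ‖∏ i ∈ S, v i ^ m i‖ := by
  simp only [norm_prod, norm_pow, ← Finset.prod_pow_eq_pow_sum, ← Finset.prod_mul_distrib,
    ← mul_pow]
  exact Finset.prod_le_prod (fun i _ => by positivity)
    fun i hi => pow_le_pow_left₀ (by positivity) (h i hi) _

theorem norm_le_of_tendsto_of_forall_mem_sphere {F : Type*} [NormedAddCommGroup F]
    [NormedSpace ℂ F] {h : ℂ → F} {c : ℂ} {R L : ℝ} {φ : ℝ → ℝ}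
    (hh : DifferentiableOn ℂ h (ball c R)) (hφ : Tendsto φ (𝓝[<] R) (𝓝 L))
    (hbound : ∀ᶠ ρ in 𝓝[<] R, ∀ ζ ∈ sphere c ρ, ‖h ζ‖ ≤ φ ρ) {w : ℂ} (hw : w ∈ ball c R) :
    ‖h w‖ ≤ L := by
  refine ge_of_tendsto hφ ?_
  filter_upwards [hbound, Ioo_mem_nhdsLT (mem_ball.1 hw)] with ρ hρ ⟨hwρ, hρR⟩
  have hρ0 : 0 < ρ := dist_nonneg.trans_lt hwρ
  refine Complex.norm_le_of_forall_mem_frontier_norm_le isBounded_ball ?_ ?_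
    (subset_closure (mem_ball.2 hwρ))
  · refine (hh.mono ?_).diffContOnCl
    rw [closure_ball c hρ0.ne']
    exact closedBall_subset_ball hρR
  · rwa [frontier_ball c hρ0.ne']

section Factorization

variable {U : Set ℂ}

theorem DifferentiableOn.exists_eq_sub_pow_mul (hU : IsOpen U) {z : ℂ} (hz : z ∈ U) :
    ∀ {k : ℕ} {f : ℂ → ℂ}, DifferentiableOn ℂ f U → (k : ℕ∞) ≤ analyticOrderAt f z →
      ∃ g : ℂ → ℂ, DifferentiableOn ℂ g U ∧ ∀ w, f w = (w - z) ^ k * g w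
  | 0, f, hf, _ => ⟨f, hf, by simp⟩
  | k + 1, f, hf, hk => by
    have hfz : f z = 0 :=
      apply_eq_zero_of_analyticOrderAt_ne_zero ((Nat.cast_pos.2 k.succ_pos).trans_le hk).ne'
    have hfactor : f = (· - z) * dslope f z := by
      ext w
      simpa [hfz] using (sub_smul_dslope f z w).symm
    have hd : DifferentiableOn ℂ (dslope f z) U :=
      (differentiableOn_dslope (hU.mem_nhds hz)).mpr hf
    have hk' : (k : ℕ∞) ≤ analyticOrderAt (dslope f z) z := by
      rw [hfactor, analyticOrderAt_mul (by fun_prop) (hd.analyticAt (hU.mem_nhds hz)),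
        analyticOrderAt_id_sub_const_self, Nat.cast_succ, add_comm] at hk
      exact (ENat.add_le_add_iff_left ENat.one_ne_top).mp hk
    obtain ⟨g, hg, hfg⟩ := DifferentiableOn.exists_eq_sub_pow_mul hU hz hd hk'
    refine ⟨g, hg, fun w => ?_⟩
    rw [hfactor, Pi.mul_apply, hfg, pow_succ']
    ring

theorem DifferentiableOn.exists_eq_prod_sub_pow_mul (hU : IsOpen U) (m : ℂ → ℕ)
    (S : Finset ℂ) : ∀ {f : ℂ → ℂ}, DifferentiableOn ℂ f U →
      (∀ z ∈ S, z ∈ U ∧ (m z : ℕ∞) ≤ analyticOrderAt f z) →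
      ∃ g : ℂ → ℂ, DifferentiableOn ℂ g U ∧ ∀ w, f w = (∏ z ∈ S, (w - z) ^ m z) * g w := by
  classical
  induction S using Finset.induction_on with
  | empty => exact fun {f} hf _ => ⟨f, hf, by simp⟩
  | @insert a S ha ih =>
    intro f hf hS
    obtain ⟨haU, hma⟩ := hS a (Finset.mem_insert_self a S)
    obtain ⟨g, hg, hfg⟩ := hf.exists_eq_sub_pow_mul hU haU hma
    have hgS : ∀ z ∈ S, z ∈ U ∧ (m z : ℕ∞) ≤ analyticOrderAt g z := by
      intro z hz
      obtain ⟨hzU, hmz⟩ := hS z (Finset.mem_insert_of_mem hz)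
      have hza : z ≠ a := fun h => ha (h ▸ hz)
      rw [show f = (· - a) ^ m a * g from funext hfg,
        analyticOrderAt_mul (by fun_prop) (hg.analyticAt (hU.mem_nhds hzU)),
        analyticOrderAt_pow (by fun_prop), analyticOrderAt_id_sub_const_of_ne hza,
        smul_zero, zero_add] at hmz
      exact ⟨hzU, hmz⟩
    obtain ⟨G, hG, hgG⟩ := ih hg hgS
    refine ⟨G, hG, fun w => ?_⟩
    rw [hfg, hgG, Finset.prod_insert ha]
    ring

end Factorization

theorem natCast_vanishOrder_le_analyticOrderAt {f : ℂ → ℂ} {z : ℂ} (hf : AnalyticAt ℂ f z) :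
    (vanishOrder f z : ℕ∞) ≤ analyticOrderAt f z :=
  (natCast_le_analyticOrderAt_iff_iteratedDeriv_eq_zero hf).2
    fun _ hi => not_not.1 (Nat.notMem_of_lt_sInf hi)

section IdentityPrinciple

variable {𝕜 E : Type*} [NontriviallyNormedField 𝕜] [NormedAddCommGroup E] [NormedSpace 𝕜 E]
  {f : 𝕜 → E} {U : Set 𝕜}

theorem AnalyticOnNhd.finite_setOf_eq_zero_of_isCompact (hf : AnalyticOnNhd 𝕜 f U)
    (hU : IsPreconnected U) (hnz : ∃ z ∈ U, f z ≠ 0) {K : Set 𝕜} (hK : IsCompact K)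
    (hKU : K ⊆ U) : {z ∈ K | f z = 0}.Finite := by
  obtain ⟨z, hz, hfz⟩ := hnz
  have hcod := (hf.eqOn_zero_or_eventually_ne_zero_of_preconnected hU).resolve_left
    fun h => hfz (h hz)
  exact (hK.finite_sdiff_of_mem_codiscreteWithin (codiscreteWithin_mono hKU hcod)).subset
    fun x hx => ⟨hx.1, not_not.2 hx.2⟩

theorem AnalyticOnNhd.exists_mem_ne_zero_of_isOpen (hf : AnalyticOnNhd 𝕜 f U)
    (hU : IsPreconnected U) (hnz : ∃ z ∈ U, f z ≠ 0) {V : Set 𝕜} (hV : IsOpen V)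
    (hVU : V ⊆ U) (hVne : V.Nonempty) : ∃ w ∈ V, f w ≠ 0 := by
  by_contra! hzero
  obtain ⟨v, hv⟩ := hVne
  obtain ⟨z, hz, hfz⟩ := hnz
  exact hfz (hf.eqOn_zero_of_preconnected_of_eventuallyEq_zero hU (hVU hv)
    (eventually_of_mem (hV.mem_nhds hv) hzero) hz)

end IdentityPrinciple

theorem norm_mul_prod_blaschkeDen_le {f G : ℂ → ℂ} {R r M : ℝ} (hr : 0 ≤ r) (hrR : r < R)
    (hM : ∀ w ∈ ball (0 : ℂ) R, ‖f w‖ ≤ M) (hG : DifferentiableOn ℂ G (ball 0 R))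
    {S : Finset ℂ} (hS : ∀ z ∈ S, ‖z‖ ≤ r) (m : ℂ → ℕ)
    (hfG : ∀ w, f w = (∏ z ∈ S, (w - z) ^ m z) * G w) {w : ℂ} (hw : w ∈ ball (0 : ℂ) R) :
    ‖G w * ∏ z ∈ S, blaschkeDen R z w ^ m z‖ ≤ M := by
  have hR : 0 < R := pos_of_mem_ball hw
  set N := ∑ z ∈ S, m z
  set c : ℝ → ℝ := fun ρ => R * (ρ - r) / (R ^ 2 - r * ρ)
  have hRr : 0 < R ^ 2 - r * R := by nlinarith
  have hcR : c R = 1 := by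
    rw [div_eq_one_iff_eq hRr.ne']
    ring
  have hc : Tendsto (fun ρ => M / c ρ ^ N) (𝓝[<] R) (𝓝 M) := by
    have : ContinuousAt (fun ρ => M / c ρ ^ N) R := by
      refine continuousAt_const.div ((ContinuousAt.div (by fun_prop) (by fun_prop) ?_).pow N) ?_
      · exact hRr.ne'
      · simp [hcR]
    simpa [hcR] using this.tendsto.mono_left nhdsWithin_le_nhds
  refine norm_le_of_tendsto_of_forall_mem_sphere
    (hG.mul (differentiable_prod_blaschkeDen R S m).differentiableOn) hc ?_ hw
  filter_upwards [Ioo_mem_nhdsLT hrR] with ρ ⟨hrρ, hρR⟩ ζ hζ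
  rw [mem_sphere_zero_iff_norm] at hζ
  have hcρ : 0 < c ρ := div_pos (by nlinarith) (by nlinarith)
  have hAP : c ρ ^ N * ‖∏ z ∈ S, blaschkeDen R z ζ ^ m z‖ ≤ ‖∏ z ∈ S, (ζ - z) ^ m z‖ :=
    pow_sum_mul_norm_prod_pow_le S m hcρ.le
      fun z hz => mul_norm_blaschkeDen_le_norm_sub hrρ hρR.le (hS z hz) hζ
  rw [le_div_iff₀' (by positivity), Pi.mul_apply, norm_mul]
  calc c ρ ^ N * (‖G ζ‖ * ‖∏ z ∈ S, blaschkeDen R z ζ ^ m z‖)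
      ≤ ‖∏ z ∈ S, (ζ - z) ^ m z‖ * ‖G ζ‖ := by nlinarith [norm_nonneg (G ζ)]
    _ = ‖f ζ‖ := by rw [hfG, norm_mul]
    _ ≤ M := hM ζ (mem_ball_zero_iff.2 (hζ.trans_lt hρR))

theorem pow_mul_norm_le_of_le_analyticOrderAt {f : ℂ → ℂ} {R r s M : ℝ} (hr : 0 < r)
    (hrR : r < R) (hsR : s < R) (hf : DifferentiableOn ℂ f (ball 0 R))
    (hM : ∀ w ∈ ball (0 : ℂ) R, ‖f w‖ ≤ M) (S : Finset ℂ) (m : ℂ → ℕ)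
    (hS : ∀ z ∈ S, ‖z‖ ≤ r ∧ (m z : ℕ∞) ≤ analyticOrderAt f z) {w : ℂ} (hw : ‖w‖ ≤ s) :
    ((R ^ 2 + s * r) / (R * (s + r))) ^ (∑ z ∈ S, m z) * ‖f w‖ ≤ M := by
  have hs : 0 ≤ s := (norm_nonneg w).trans hw
  obtain ⟨G, hG, hfG⟩ := hf.exists_eq_prod_sub_pow_mul isOpen_ball m S
    fun z hz => ⟨mem_ball_zero_iff.2 ((hS z hz).1.trans_lt hrR), (hS z hz).2⟩
  have hPA := pow_sum_mul_norm_prod_pow_le S m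
    (div_nonneg (by positivity) (by nlinarith)) fun z hz =>
      mul_norm_sub_le_norm_blaschkeDen hr hrR.le hsR.le (hS z hz).1 hw
  have hGA := norm_mul_prod_blaschkeDen_le hr.le hrR hM hG (fun z hz => (hS z hz).1) m hfG
    (mem_ball_zero_iff.2 (hw.trans_lt hsR))
  calc _ = ((R ^ 2 + s * r) / (R * (s + r))) ^ (∑ z ∈ S, m z) * ‖∏ z ∈ S, (w - z) ^ m z‖
        * ‖G w‖ := by rw [hfG, norm_mul, mul_assoc]
    _ ≤ ‖∏ z ∈ S, blaschkeDen R z w ^ m z‖ * ‖G w‖ :=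
      mul_le_mul_of_nonneg_right hPA (norm_nonneg _)
    _ ≤ M := by rwa [mul_comm, ← norm_mul]

/-- Zero-counting bound: if `f` is holomorphic and bounded on the
open disk of radius `r1`, not identically zero, with `M_f(ρ)` denoting the sup of
`|f|` on the open disk of radius `ρ`, then for `0 < r < r2 < r1` the number of
zeros of `f` in the closed disk of radius `r`, counted with multiplicity,
is at most `log(M_f(r1)/M_f(r2)) / log((r1² + r2·r)/(r1·(r2 + r)))`. -/
theorem stmt8 (r r2 r1 : ℝ) (h0 : 0 < r) (hrr2 : r < r2) (hr21 : r2 < r1)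
    (f : ℂ → ℂ) (hf : DifferentiableOn ℂ f (Metric.ball 0 r1))
    (hnz : ∃ z ∈ Metric.ball (0 : ℂ) r1, f z ≠ 0)
    (M1 M2 : ℝ)
    (hM1 : IsLUB ((fun z => ‖f z‖) '' Metric.ball (0 : ℂ) r1) M1)
    (hM2 : IsLUB ((fun z => ‖f z‖) '' Metric.ball (0 : ℂ) r2) M2) :
    ∃ hfin : {z ∈ Metric.closedBall (0 : ℂ) r | f z = 0}.Finite,
      ((∑ z ∈ hfin.toFinset, vanishOrder f z : ℕ) : ℝ) ≤
        Real.log (M1 / M2) / Real.log ((r1 ^ 2 + r2 * r) / (r1 * (r2 + r))) := by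
  have hrr1 : r < r1 := hrr2.trans hr21
  have hfa : AnalyticOnNhd ℂ f (ball 0 r1) := hf.analyticOnNhd isOpen_ball
  have hconn : IsPreconnected (ball (0 : ℂ) r1) := (convex_ball 0 r1).isPreconnected
  have hfin := hfa.finite_setOf_eq_zero_of_isCompact hconn hnz (isCompact_closedBall 0 r)
    (closedBall_subset_ball hrr1)
  refine ⟨hfin, ?_⟩
  set Q := (r1 ^ 2 + r2 * r) / (r1 * (r2 + r))
  set N := ∑ z ∈ hfin.toFinset, vanishOrder f z
  have hQ : 1 < Q := by
    rw [one_lt_div (by nlinarith)]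
    nlinarith [mul_pos (sub_pos.2 hr21) (sub_pos.2 hrr1)]
  have hM2M1 : Q ^ N * M2 ≤ M1 := by
    rw [← le_div_iff₀' (by positivity)]
    refine hM2.2 (forall_mem_image.2 fun w hw => (le_div_iff₀' (by positivity)).2 ?_)
    refine pow_mul_norm_le_of_le_analyticOrderAt h0 hrr1 hr21 hf
      (fun w hw => hM1.1 (mem_image_of_mem _ hw)) _ _ (fun z hz => ?_) (mem_ball_zero_iff.1 hw).le
    obtain ⟨hzr, -⟩ := hfin.mem_toFinset.1 hz
    exact ⟨mem_closedBall_zero_iff.1 hzr,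
      natCast_vanishOrder_le_analyticOrderAt (hfa z (closedBall_subset_ball hrr1 hzr))⟩
  obtain ⟨w, hw, hfw⟩ := hfa.exists_mem_ne_zero_of_isOpen hconn hnz isOpen_ball
    (ball_subset_ball hr21.le) (nonempty_ball.2 (h0.trans hrr2))
  have hM2 : 0 < M2 := (norm_pos_iff.2 hfw).trans_le (hM2.1 (mem_image_of_mem _ hw))
  rw [le_div_iff₀ (Real.log_pos hQ), ← Real.log_pow]
  exact Real.log_le_log (by positivity) ((le_div_iff₀ hM2).2 hM2M1)
end

section
/- Let f be a bounded holomorphic function on the open unit disk of ℂ, not identically zero, and let M_f(ρ) = sup_{|z| < ρ} |f(z)|. Fix 0 < r < r2 < 1 and let n be the number of zeros of f in the closed disk {|z| ≤ r}, counted with multiplicity. Then M_f(r2) ≤ M_f(1) · ((r2 + r)/(1 + r2·r))^n. -/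
open Set

/-!
Divide out the zeros of `f` in the closed disk of radius `r` one at a time by Blaschke factors
`B_a z = (z - a) / (1 - conj a * z)`. Since `|B_a| → 1` at the unit circle, the maximum principle
shows that `f / B_a` is still bounded by `M_f(1)`, and it has one zero fewer in that disk. For
`|a| ≤ r` and `|z| ≤ r2`, `|B_a z| ≤ (|z| + |a|) / (1 + |z| |a|) ≤ (r2 + r) / (1 + r2 r)`, so each
factor contributes at most this ratio to the bound on `M_f(r2)`.
-/

open Metric Filter Topology ComplexConjugate

namespace Complex

theorem norm_one_sub_conj_mul_pos {a w : ℂ} (h : ‖a‖ * ‖w‖ < 1) : 0 < ‖1 - conj a * w‖ := by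
  have := norm_sub_norm_le (1 : ℂ) (conj a * w)
  rw [norm_one, norm_mul, norm_conj] at this
  linarith

theorem norm_one_sub_conj_mul_sq (a w : ℂ) :
    ‖1 - conj a * w‖ ^ 2 = ‖w - a‖ ^ 2 + (1 - ‖a‖ ^ 2) * (1 - ‖w‖ ^ 2) := by
  simp only [Complex.sq_norm, normSq_apply, sub_re, sub_im, mul_re, mul_im, conj_re, conj_im,
    one_re, one_im]
  ring

theorem norm_sub_mul_one_add_le (a w : ℂ) (ha : ‖a‖ ≤ 1) (hw : ‖w‖ ≤ 1) :
    ‖w - a‖ * (1 + ‖w‖ * ‖a‖) ≤ (‖w‖ + ‖a‖) * ‖1 - conj a * w‖ := by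
  have hY : ‖1 - conj a * w‖ ≤ 1 + ‖w‖ * ‖a‖ := by
    simpa [mul_comm] using norm_sub_le (1 : ℂ) (conj a * w)
  have key : ((‖w‖ + ‖a‖) * ‖1 - conj a * w‖) ^ 2 - (‖w - a‖ * (1 + ‖w‖ * ‖a‖)) ^ 2 =
      (1 - ‖a‖ ^ 2) * (1 - ‖w‖ ^ 2) * ((1 + ‖w‖ * ‖a‖) ^ 2 - ‖1 - conj a * w‖ ^ 2) := by
    linear_combination (1 + ‖w‖ * ‖a‖) ^ 2 * norm_one_sub_conj_mul_sq a w
  rw [← pow_le_pow_iff_left₀ (by positivity) (by positivity) two_ne_zero, ← sub_nonneg, key]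
  have := norm_nonneg (1 - conj a * w)
  have := norm_nonneg a
  have := norm_nonneg w
  apply mul_nonneg (mul_nonneg _ _) _ <;> nlinarith

theorem sub_norm_mul_le (a w : ℂ) (haw : ‖a‖ ≤ ‖w‖) (hw : ‖w‖ ≤ 1) :
    (‖w‖ - ‖a‖) * ‖1 - conj a * w‖ ≤ (1 - ‖w‖ * ‖a‖) * ‖w - a‖ := by
  have hY : 1 - ‖w‖ * ‖a‖ ≤ ‖1 - conj a * w‖ := by
    simpa [mul_comm] using norm_sub_norm_le (1 : ℂ) (conj a * w)
  have key : ((1 - ‖w‖ * ‖a‖) * ‖w - a‖) ^ 2 - ((‖w‖ - ‖a‖) * ‖1 - conj a * w‖) ^ 2 =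
      (1 - ‖a‖ ^ 2) * (1 - ‖w‖ ^ 2) * (‖1 - conj a * w‖ ^ 2 - (1 - ‖w‖ * ‖a‖) ^ 2) := by
    linear_combination -(1 - ‖w‖ * ‖a‖) ^ 2 * norm_one_sub_conj_mul_sq a w
  have := norm_nonneg a
  have hwa : ‖w‖ * ‖a‖ ≤ 1 := by nlinarith
  rw [← pow_le_pow_iff_left₀ (by nlinarith [norm_nonneg (1 - conj a * w)])
    (by nlinarith [norm_nonneg (w - a)]) two_ne_zero, ← sub_nonneg, key]
  apply mul_nonneg (mul_nonneg _ _) _ <;> nlinarith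

theorem norm_sub_mul_one_add_le_of_le {a z : ℂ} {r r2 : ℝ} (ha : ‖a‖ ≤ r) (hr : r ≤ 1)
    (hz : ‖z‖ ≤ r2) (hr2 : r2 ≤ 1) :
    ‖z - a‖ * (1 + r2 * r) ≤ (r2 + r) * ‖1 - conj a * z‖ := by
  have h1 := norm_sub_mul_one_add_le a z (ha.trans hr) (hz.trans hr2)
  have hra : r * ‖a‖ ≤ 1 := mul_le_one₀ hr (norm_nonneg a) (ha.trans hr)
  have hzr2 : ‖z‖ * r2 ≤ 1 := mul_le_one₀ (hz.trans hr2) ((norm_nonneg z).trans hz) hr2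
  have h2 : (‖z‖ + ‖a‖) * (1 + r2 * r) ≤ (r2 + r) * (1 + ‖z‖ * ‖a‖) := by
    nlinarith [mul_nonneg (sub_nonneg.2 hz) (sub_nonneg.2 hra),
      mul_nonneg (sub_nonneg.2 ha) (sub_nonneg.2 hzr2)]
  refine le_of_mul_le_mul_right ?_ (by positivity : 0 < 1 + ‖z‖ * ‖a‖)
  calc ‖z - a‖ * (1 + r2 * r) * (1 + ‖z‖ * ‖a‖)
      = ‖z - a‖ * (1 + ‖z‖ * ‖a‖) * (1 + r2 * r) := by ring
    _ ≤ (‖z‖ + ‖a‖) * ‖1 - conj a * z‖ * (1 + r2 * r) := by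
      gcongr; nlinarith [norm_nonneg a, norm_nonneg z]
    _ = (‖z‖ + ‖a‖) * (1 + r2 * r) * ‖1 - conj a * z‖ := by ring
    _ ≤ (r2 + r) * (1 + ‖z‖ * ‖a‖) * ‖1 - conj a * z‖ := by gcongr
    _ = (r2 + r) * ‖1 - conj a * z‖ * (1 + ‖z‖ * ‖a‖) := by ring

theorem norm_le_of_tendsto_sphere_bound {g : ℂ → ℂ}
    (hg : DifferentiableOn ℂ g (ball 0 1)) {c : ℝ → ℝ} {M : ℝ} (hc : Tendsto c (𝓝[<] 1) (𝓝 M))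
    (hbound : ∀ᶠ ρ in 𝓝[<] 1, ∀ w, ‖w‖ = ρ → ‖g w‖ ≤ c ρ) {z : ℂ} (hz : z ∈ ball 0 1) :
    ‖g z‖ ≤ M := by
  rw [mem_ball_zero_iff] at hz
  refine ge_of_tendsto hc ?_
  filter_upwards [hbound, Ioo_mem_nhdsLT hz] with ρ hρ ⟨hzρ, hρ1⟩
  have hρ0 : ρ ≠ 0 := ((norm_nonneg z).trans_lt hzρ).ne'
  refine norm_le_of_forall_mem_frontier_norm_le isBounded_ball
    (hg.diffContOnCl_ball (closedBall_subset_ball hρ1)) (fun w hw ↦ hρ w ?_) ?_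
  · simpa [frontier_ball (0 : ℂ) hρ0] using hw
  · simpa [closure_ball (0 : ℂ) hρ0] using hzρ.le

end Complex

-- Both sides are the junk value `0` where `f` vanishes to infinite order.
theorem AnalyticAt.vanishOrder_eq {f : ℂ → ℂ} {z : ℂ} (hf : AnalyticAt ℂ f z) :
    vanishOrder f z = analyticOrderNatAt f z := by
  cases h : analyticOrderAt f z using ENat.recTopCoe with
  | top =>
    have hzero (k : ℕ) : iteratedDeriv k f z = 0 :=
      (natCast_le_analyticOrderAt_iff_iteratedDeriv_eq_zero hf (n := k + 1)).1 (by simp [h]) k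
        (lt_add_one k)
    simp [vanishOrder, analyticOrderNatAt, h, hzero]
  | coe n =>
    obtain ⟨hlt, hn⟩ := (analyticOrderAt_eq_nat_iff_iteratedDeriv_eq_zero hf).1 h
    rw [analyticOrderNatAt, h, ENat.toNat_natCast]
    exact le_antisymm (Nat.sInf_le hn)
      (le_csInf ⟨n, hn⟩ fun k hk ↦ not_lt.1 fun hkn ↦ hk (hlt k hkn))

theorem apply_eq_zero_of_vanishOrder_ne_zero {f : ℂ → ℂ} {z : ℂ} (h : vanishOrder f z ≠ 0) :
    f z = 0 := by
  by_contra hfz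
  exact h (Nat.sInf_eq_zero.2 (Or.inl (by simpa using hfz)))

/-- `f / B_a` for the Blaschke factor `B_a z = (z - a) / (1 - conj a * z)`, with the removable
singularity at a zero `a` of `f` filled in by `dslope`. -/
noncomputable def divBlaschke (f : ℂ → ℂ) (a w : ℂ) : ℂ :=
  (1 - conj a * w) * dslope f a w

section divBlaschke

variable {f : ℂ → ℂ} {a : ℂ}

theorem sub_mul_divBlaschke (hfa : f a = 0) (w : ℂ) :
    (w - a) * divBlaschke f a w = (1 - conj a * w) * f w := by
  rw [divBlaschke, mul_left_comm, ← smul_eq_mul (w - a), sub_smul_dslope, hfa, sub_zero]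

theorem differentiableOn_divBlaschke (hf : DifferentiableOn ℂ f (ball 0 1)) (ha : a ∈ ball 0 1) :
    DifferentiableOn ℂ (divBlaschke f a) (ball 0 1) :=
  (by fun_prop : Differentiable ℂ fun w ↦ 1 - conj a * w).differentiableOn.mul
    ((Complex.differentiableOn_dslope (isOpen_ball.mem_nhds ha)).2 hf)

theorem norm_divBlaschke_le_of_norm_eq (hfa : f a = 0) {M : ℝ}
    (hM : ∀ w ∈ ball 0 1, ‖f w‖ ≤ M) {ρ : ℝ} (haρ : ‖a‖ < ρ) (hρ : ρ < 1) {w : ℂ}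
    (hw : ‖w‖ = ρ) : ‖divBlaschke f a w‖ ≤ M * ((1 - ρ * ‖a‖) / (ρ - ‖a‖)) := by
  have hY : 0 < ‖1 - conj a * w‖ :=
    Complex.norm_one_sub_conj_mul_pos (by rw [hw]; nlinarith [norm_nonneg a])
  have hlow := Complex.sub_norm_mul_le a w (hw ▸ haρ.le) (hw ▸ hρ.le)
  rw [hw] at hlow
  have hid : ‖w - a‖ * ‖divBlaschke f a w‖ = ‖1 - conj a * w‖ * ‖f w‖ := by
    rw [← norm_mul, ← norm_mul, sub_mul_divBlaschke hfa]
  have hfw : ‖f w‖ ≤ M := hM w (by simpa [hw] using hρ)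
  rw [mul_div_assoc', le_div_iff₀ (sub_pos.2 haρ)]
  refine le_of_mul_le_mul_right ?_ hY
  calc ‖divBlaschke f a w‖ * (ρ - ‖a‖) * ‖1 - conj a * w‖
      ≤ ‖divBlaschke f a w‖ * ((1 - ρ * ‖a‖) * ‖w - a‖) := by
        rw [mul_assoc]; gcongr
    _ = (1 - ρ * ‖a‖) * (‖1 - conj a * w‖ * ‖f w‖) := by rw [← hid]; ring
    _ ≤ (1 - ρ * ‖a‖) * (‖1 - conj a * w‖ * M) := by
        gcongr
        nlinarith [norm_nonneg a]
    _ = M * (1 - ρ * ‖a‖) * ‖1 - conj a * w‖ := by ring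

theorem norm_divBlaschke_le (hf : DifferentiableOn ℂ f (ball 0 1)) (ha : a ∈ ball 0 1)
    (hfa : f a = 0) {M : ℝ} (hM : ∀ w ∈ ball 0 1, ‖f w‖ ≤ M) {z : ℂ} (hz : z ∈ ball 0 1) :
    ‖divBlaschke f a z‖ ≤ M := by
  rw [mem_ball_zero_iff] at ha
  have hcont : ContinuousAt (fun ρ : ℝ ↦ M * ((1 - ρ * ‖a‖) / (ρ - ‖a‖))) 1 := by
    fun_prop (disch := exact (sub_pos.2 ha).ne')
  have hlim : Tendsto (fun ρ : ℝ ↦ M * ((1 - ρ * ‖a‖) / (ρ - ‖a‖))) (𝓝[<] 1) (𝓝 M) := by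
    simpa [div_self (sub_pos.2 ha).ne'] using hcont.tendsto.mono_left nhdsWithin_le_nhds
  refine Complex.norm_le_of_tendsto_sphere_bound (differentiableOn_divBlaschke hf
    (mem_ball_zero_iff.2 ha)) hlim ?_ hz
  filter_upwards [Ioo_mem_nhdsLT ha] with ρ ⟨haρ, hρ⟩ w hw
  exact norm_divBlaschke_le_of_norm_eq hfa hM haρ hρ hw

theorem vanishOrder_eq_vanishOrder_divBlaschke_add (hf : DifferentiableOn ℂ f (ball 0 1))
    (ha : a ∈ ball 0 1) (hfa : vanishOrder f a ≠ 0) {w : ℂ} (hw : w ∈ ball 0 1) :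
    vanishOrder f w = vanishOrder (divBlaschke f a) w + if w = a then 1 else 0 := by
  have hA : AnalyticOnNhd ℂ f (ball 0 1) := hf.analyticOnNhd isOpen_ball
  have hgA : AnalyticOnNhd ℂ (divBlaschke f a) (ball 0 1) :=
    (differentiableOn_divBlaschke hf ha).analyticOnNhd isOpen_ball
  have hfa0 := apply_eq_zero_of_vanishOrder_ne_zero hfa
  rw [(hA a ha).vanishOrder_eq] at hfa
  have htop : analyticOrderAt f w ≠ ⊤ :=
    hA.analyticOrderAt_ne_top_of_isPreconnected (convex_ball 0 1).isPreconnected ha hw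
      fun h ↦ hfa (by simp [analyticOrderNatAt, h])
  have hprod : (· - a) * divBlaschke f a = (fun z ↦ 1 - conj a * z) * f :=
    funext (sub_mul_divBlaschke hfa0)
  have hunit : analyticOrderAt (fun z ↦ 1 - conj a * z) w = 0 := by
    rw [mem_ball_zero_iff] at ha hw
    refine analyticOrderAt_eq_zero.2 (Or.inr (norm_pos_iff.1 ?_))
    exact Complex.norm_one_sub_conj_mul_pos (by nlinarith [norm_nonneg a, norm_nonneg w])
  have key : analyticOrderAt f w =
      analyticOrderAt (· - a) w + analyticOrderAt (divBlaschke f a) w := by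
    have := congrArg (analyticOrderAt · w) hprod
    rwa [analyticOrderAt_mul (by fun_prop) (hgA w hw), analyticOrderAt_mul (by fun_prop) (hA w hw),
      hunit, zero_add, eq_comm] at this
  rw [key] at htop
  obtain ⟨htop_sub, htop_g⟩ := WithTop.add_ne_top.1 htop
  rw [(hA w hw).vanishOrder_eq, (hgA w hw).vanishOrder_eq, analyticOrderNatAt, analyticOrderNatAt,
    key, ENat.toNat_add htop_sub htop_g, add_comm]
  split_ifs with hwa <;> simp [hwa]

theorem sum_vanishOrder_eq_sum_vanishOrder_divBlaschke_add_one
    (hf : DifferentiableOn ℂ f (ball 0 1)) (ha : a ∈ ball 0 1) (hfa : vanishOrder f a ≠ 0)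
    {S : Finset ℂ} (hS : (S : Set ℂ) ⊆ ball 0 1) (haS : a ∈ S) :
    ∑ w ∈ S, vanishOrder f w = ∑ w ∈ S, vanishOrder (divBlaschke f a) w + 1 := by
  rw [Finset.sum_congr rfl fun w hw ↦
      vanishOrder_eq_vanishOrder_divBlaschke_add hf ha hfa (hS hw),
    Finset.sum_add_distrib, Finset.sum_ite_eq' S a, if_pos haS]

theorem norm_le_mul_norm_divBlaschke (hfa : f a = 0) {z : ℂ} {r r2 : ℝ}
    (ha : ‖a‖ ≤ r) (hr : r < 1) (hz : ‖z‖ ≤ r2) (hr2 : r2 ≤ 1) :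
    ‖f z‖ ≤ (r2 + r) / (1 + r2 * r) * ‖divBlaschke f a z‖ := by
  have hY : 0 < ‖1 - conj a * z‖ :=
    Complex.norm_one_sub_conj_mul_pos (by nlinarith [norm_nonneg a, norm_nonneg z])
  have hid : ‖f z‖ * ‖1 - conj a * z‖ = ‖z - a‖ * ‖divBlaschke f a z‖ := by
    rw [← norm_mul, ← norm_mul, sub_mul_divBlaschke hfa, mul_comm]
  rw [div_mul_eq_mul_div, le_div_iff₀ (by nlinarith [norm_nonneg a, norm_nonneg z])]
  refine le_of_mul_le_mul_right ?_ hY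
  calc ‖f z‖ * (1 + r2 * r) * ‖1 - conj a * z‖
      = ‖z - a‖ * (1 + r2 * r) * ‖divBlaschke f a z‖ := by rw [mul_right_comm, hid]; ring
    _ ≤ (r2 + r) * ‖1 - conj a * z‖ * ‖divBlaschke f a z‖ :=
      mul_le_mul_of_nonneg_right (Complex.norm_sub_mul_one_add_le_of_le ha hr.le hz hr2)
        (norm_nonneg _)
    _ = (r2 + r) * ‖divBlaschke f a z‖ * ‖1 - conj a * z‖ := by ring

end divBlaschke

theorem norm_le_mul_pow_sum_vanishOrder {r r2 : ℝ} (hrr2 : r < r2) (hr21 : r2 < 1)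
    {S : Finset ℂ} (hS : (S : Set ℂ) ⊆ closedBall 0 r) {M : ℝ} {f : ℂ → ℂ}
    (hf : DifferentiableOn ℂ f (ball 0 1)) (hM : ∀ w ∈ ball 0 1, ‖f w‖ ≤ M) {z : ℂ}
    (hz : ‖z‖ ≤ r2) :
    ‖f z‖ ≤ M * ((r2 + r) / (1 + r2 * r)) ^ ∑ w ∈ S, vanishOrder f w := by
  induction hn : ∑ w ∈ S, vanishOrder f w generalizing f with
  | zero => simpa using hM z (mem_ball_zero_iff.2 (hz.trans_lt hr21))
  | succ n ih =>
    have hsum : ∑ w ∈ S, vanishOrder f w ≠ 0 := by omega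
    obtain ⟨a, haS, hfa⟩ := Finset.exists_ne_zero_of_sum_ne_zero hsum
    have har : ‖a‖ ≤ r := mem_closedBall_zero_iff.1 (hS haS)
    have hr : r < 1 := hrr2.trans hr21
    have hS1 : (S : Set ℂ) ⊆ ball 0 1 := hS.trans (closedBall_subset_ball hr)
    have ha := hS1 haS
    have hfa0 := apply_eq_zero_of_vanishOrder_ne_zero hfa
    have hq : 0 ≤ (r2 + r) / (1 + r2 * r) := by
      have := (norm_nonneg a).trans har
      exact div_nonneg (by linarith) (by nlinarith)
    have hg := ih (differentiableOn_divBlaschke hf ha) (fun _ ↦ norm_divBlaschke_le hf ha hfa0 hM)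
      (by have := sum_vanishOrder_eq_sum_vanishOrder_divBlaschke_add_one hf ha hfa hS1 haS; omega)
    calc ‖f z‖ ≤ (r2 + r) / (1 + r2 * r) * ‖divBlaschke f a z‖ :=
          norm_le_mul_norm_divBlaschke hfa0 har hr hz hr21.le
      _ ≤ (r2 + r) / (1 + r2 * r) * (M * ((r2 + r) / (1 + r2 * r)) ^ n) := by gcongr
      _ = M * ((r2 + r) / (1 + r2 * r)) ^ (n + 1) := by ring

theorem stmt9_general (f : ℂ → ℂ) (hf : DifferentiableOn ℂ f (Metric.ball 0 1))
    (r r2 : ℝ) (hrr2 : r < r2) (hr21 : r2 < 1)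
    (M1 M2 : ℝ)
    (hM1 : IsLUB ((fun z => ‖f z‖) '' Metric.ball (0 : ℂ) 1) M1)
    (hM2 : IsLUB ((fun z => ‖f z‖) '' Metric.ball (0 : ℂ) r2) M2)
    (hfin : {z ∈ Metric.closedBall (0 : ℂ) r | f z = 0}.Finite)
    (n : ℕ) (hn : n = ∑ z ∈ hfin.toFinset, vanishOrder f z) :
    M2 ≤ M1 * ((r2 + r) / (1 + r2 * r)) ^ n := by
  have hS : (hfin.toFinset : Set ℂ) ⊆ closedBall 0 r := fun w hw ↦ (hfin.mem_toFinset.1 hw).1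
  refine hM2.2 ?_
  rintro _ ⟨z, hz, rfl⟩
  rw [hn]
  exact norm_le_mul_pow_sum_vanishOrder hrr2 hr21 hS hf (fun w hw ↦ hM1.1 ⟨w, hw, rfl⟩)
    (mem_ball_zero_iff.1 hz).le

/-- If `f` is bounded and holomorphic on the open unit disk, not
identically zero, and has `n` zeros (with multiplicity) in the closed disk of
radius `r < r2 < 1`, then `M_f(r2) ≤ M_f(1) · ((r2 + r)/(1 + r2·r))^n`. -/
theorem stmt9 (f : ℂ → ℂ) (hf : DifferentiableOn ℂ f (Metric.ball 0 1))
    (hnz : ∃ z ∈ Metric.ball (0 : ℂ) 1, f z ≠ 0)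
    (r r2 : ℝ) (h0 : 0 < r) (hrr2 : r < r2) (hr21 : r2 < 1)
    (M1 M2 : ℝ)
    (hM1 : IsLUB ((fun z => ‖f z‖) '' Metric.ball (0 : ℂ) 1) M1)
    (hM2 : IsLUB ((fun z => ‖f z‖) '' Metric.ball (0 : ℂ) r2) M2)
    (hfin : {z ∈ Metric.closedBall (0 : ℂ) r | f z = 0}.Finite)
    (n : ℕ) (hn : n = ∑ z ∈ hfin.toFinset, vanishOrder f z) :
    M2 ≤ M1 * ((r2 + r) / (1 + r2 * r)) ^ n :=
  stmt9_general f hf r r2 hrr2 hr21 M1 M2 hM1 hM2 hfin n hn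
end

section
/- Let θ0 > 0 and K0 > 2. Let κ : ℝ → ℝ be an even, convex, differentiable function with κ(0) = 0 and κ(θ) > 0 for all θ > θ0, satisfying K0·κ(θ) ≤ κ(2θ) for all θ > θ0, and write μ = κ'. Then there exist θ0' > 0 and m0 ∈ ℕ such that for every θ1 > θ0' there exists θ* ∈ [θ1, 2^{m0−1}·θ1] with μ(2θ*) − μ(θ*) > 1. -/
/-!
If `μ(2θ) - μ(θ) ≤ 1` at `θ = x, 2x, …, 2^{n+1} x`, telescoping gives
`μ(2^{n+2} x) ≤ μ(x) + n + 2`. Convexity bounds `μ(x)` above by the secant slope `κ(2x)/x`,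
and `μ(2^{n+2} x)` below by the secant slope over `[2^{n+1} x, 2^{n+2} x]`, which the doubling
condition makes at least `(K0 - 1) (K0/2)^n κ(2x)/(2x)`. As `κ(θ)/θ` is nondecreasing and
eventually positive, this lower bound grows exponentially in `n` while the upper bound grows
linearly, so a fixed `n` gives a contradiction for every large `x`.
-/

open Set Filter

theorem exists_nat_add_lt_mul_pow {q : ℝ} (hq : 1 < q) {A : ℝ} (hA : 0 < A) (b : ℝ) :
    ∃ n : ℕ, n + b < A * q ^ n := by
  have hlin : ∀ᶠ n : ℕ in atTop, (n : ℝ) ≤ A / 2 * q ^ n := by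
    filter_upwards [(isLittleO_coe_const_pow_of_one_lt (R := ℝ) hq).bound (half_pos hA)] with n hn
    simpa [abs_of_pos (zero_lt_one.trans hq)] using hn
  have hconst : ∀ᶠ n : ℕ in atTop, b < A / 2 * q ^ n :=
    ((tendsto_pow_atTop_atTop_of_one_lt hq).const_mul_atTop (half_pos hA)).eventually_gt_atTop b
  obtain ⟨n, hn, hb⟩ := (hlin.and hconst).exists
  exact ⟨n, by linarith⟩

theorem le_add_of_succ_sub_le_one (u : ℕ → ℝ) (m : ℕ) (h : ∀ j < m, u (j + 1) - u j ≤ 1) :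
    u m ≤ u 0 + m := by
  have hsum := Finset.sum_le_sum fun j hj => h j (Finset.mem_range.mp hj)
  rw [Finset.sum_range_sub] at hsum
  simp only [Finset.sum_const, Finset.card_range, nsmul_eq_mul, mul_one] at hsum
  linarith

theorem le_add_of_forall_Icc_sub_le_one {g : ℝ → ℝ} {x : ℝ} (hx : 0 < x) {m : ℕ}
    (h : ∀ θ ∈ Icc x (2 ^ m * x), g (2 * θ) - g θ ≤ 1) :
    g (2 ^ (m + 1) * x) ≤ g x + (m + 1 : ℕ) := by
  have := le_add_of_succ_sub_le_one (fun j => g (2 ^ j * x)) (m + 1) fun j hj => by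
    have hmem : 2 ^ j * x ∈ Icc x (2 ^ m * x) :=
      ⟨le_mul_of_one_le_left hx.le (one_le_pow₀ one_le_two),
        mul_le_mul_of_nonneg_right (pow_le_pow_right₀ one_le_two (by omega)) hx.le⟩
    simpa only [pow_succ, mul_comm _ (2 : ℝ), mul_assoc] using h _ hmem
  simpa using this

theorem lt_two_pow_mul {θ0 θ : ℝ} (hθ0 : 0 ≤ θ0) (hθ : θ0 < θ) (n : ℕ) : θ0 < 2 ^ n * θ :=
  hθ.trans_le (le_mul_of_one_le_left (hθ0.trans hθ.le) (one_le_pow₀ one_le_two))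

section Doubling

variable {f : ℝ → ℝ} {K θ0 θ : ℝ}

theorem pow_mul_le_two_pow_mul (hK : 0 ≤ K) (hθ0 : 0 ≤ θ0)
    (hgrow : ∀ θ, θ0 < θ → K * f θ ≤ f (2 * θ)) (hθ : θ0 < θ) (n : ℕ) :
    K ^ n * f θ ≤ f (2 ^ n * θ) := by
  induction n with
  | zero => simp
  | succ n ih =>
    calc K ^ (n + 1) * f θ = K * (K ^ n * f θ) := by ring
      _ ≤ K * f (2 ^ n * θ) := mul_le_mul_of_nonneg_left ih hK
      _ ≤ f (2 * (2 ^ n * θ)) := hgrow _ (lt_two_pow_mul hθ0 hθ n)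
      _ = f (2 ^ (n + 1) * θ) := by rw [pow_succ, mul_comm _ (2 : ℝ), mul_assoc]

theorem half_pow_mul_div_le_div_two_pow_mul (hK : 0 ≤ K) (hθ0 : 0 ≤ θ0)
    (hgrow : ∀ θ, θ0 < θ → K * f θ ≤ f (2 * θ)) (hθ : θ0 < θ) (n : ℕ) :
    (K / 2) ^ n * (f θ / θ) ≤ f (2 ^ n * θ) / (2 ^ n * θ) := by
  have hθpos : 0 < θ := hθ0.trans_lt hθ
  rw [div_pow, div_mul_div_comm, div_le_div_iff_of_pos_right (by positivity)]
  exact pow_mul_le_two_pow_mul hK hθ0 hgrow hθ n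

end Doubling

namespace ConvexOn

variable {f : ℝ → ℝ}

theorem div_le_div_of_map_zero (hf : ConvexOn ℝ (Ici 0) f) (h0 : f 0 = 0) {a b : ℝ}
    (ha : 0 < a) (hab : a ≤ b) : f a / a ≤ f b / b := by
  have hb : 0 < b := ha.trans_le hab
  simpa [h0] using hf.secant_mono (a := 0) self_mem_Ici ha.le hb.le ha.ne' hb.ne' hab

theorem deriv_le_slope_two_mul (hf : ConvexOn ℝ univ f) {y : ℝ} (hy : 0 < y)
    (hd : DifferentiableAt ℝ f y) : deriv f y ≤ (f (2 * y) - f y) / y := by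
  simpa [slope_def_field, two_mul] using
    hf.deriv_le_slope (mem_univ y) (mem_univ (2 * y)) (by linarith) hd

theorem slope_two_mul_le_deriv (hf : ConvexOn ℝ univ f) {y : ℝ} (hy : 0 < y)
    (hd : DifferentiableAt ℝ f (2 * y)) : (f (2 * y) - f y) / y ≤ deriv f (2 * y) := by
  simpa [slope_def_field, two_mul] using
    hf.slope_le_deriv (mem_univ y) (mem_univ (2 * y)) (by linarith) hd

theorem deriv_le_div_two_mul (hf : ConvexOn ℝ univ f) {y : ℝ} (hy : 0 < y)
    (hd : DifferentiableAt ℝ f y) (hfy : 0 ≤ f y) : deriv f y ≤ f (2 * y) / y :=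
  (hf.deriv_le_slope_two_mul hy hd).trans (by gcongr; linarith)

theorem sub_one_mul_half_pow_mul_div_le_deriv (hf : ConvexOn ℝ univ f)
    (hd : Differentiable ℝ f) {K θ0 θ : ℝ} (hK : 1 ≤ K) (hθ0 : 0 ≤ θ0)
    (hgrow : ∀ θ, θ0 < θ → K * f θ ≤ f (2 * θ)) (hθ : θ0 < θ) (n : ℕ) :
    (K - 1) * ((K / 2) ^ n * (f θ / θ)) ≤ deriv f (2 ^ (n + 1) * θ) := by
  set y := 2 ^ n * θ
  have hy : θ0 < y := lt_two_pow_mul hθ0 hθ n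
  have hypos : 0 < y := hθ0.trans_lt hy
  calc (K - 1) * ((K / 2) ^ n * (f θ / θ)) ≤ (K - 1) * (f y / y) :=
        mul_le_mul_of_nonneg_left
          (half_pow_mul_div_le_div_two_pow_mul (by linarith) hθ0 hgrow hθ n) (by linarith)
    _ ≤ (f (2 * y) - f y) / y := by
        rw [mul_div_assoc']
        gcongr
        linarith [hgrow y hy]
    _ ≤ deriv f (2 * y) := hf.slope_two_mul_le_deriv hypos (hd _)
    _ = deriv f (2 ^ (n + 1) * θ) := by rw [pow_succ, mul_comm _ (2 : ℝ), mul_assoc]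

end ConvexOn

theorem stmt12_general (θ0 K0 : ℝ) (hK0 : 2 < K0)
    (κ : ℝ → ℝ)
    (hconv : ConvexOn ℝ Set.univ κ) (hdiff : Differentiable ℝ κ)
    (h0 : κ 0 = 0) (hpos : ∀ θ : ℝ, θ0 < θ → 0 < κ θ)
    (hgrow : ∀ θ : ℝ, θ0 < θ → K0 * κ θ ≤ κ (2 * θ)) :
    ∃ (θ0' : ℝ) (m0 : ℕ), 0 < θ0' ∧
      ∀ θ1 : ℝ, θ0' < θ1 →
        ∃ θs ∈ Set.Icc θ1 ((2 : ℝ) ^ (m0 - 1) * θ1),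
          1 < deriv κ (2 * θs) - deriv κ θs := by
  have hθ0 : 0 ≤ θ0 := le_of_not_gt fun h => (hpos 0 h).ne' h0
  set r := θ0 + 1
  have hr : 0 < r := by positivity
  set c := κ r / r
  have hc : 0 < c := div_pos (hpos r (by linarith)) hr
  obtain ⟨n, hn⟩ := exists_nat_add_lt_mul_pow (q := K0 / 2) (by linarith)
    (A := c * (K0 - 1)) (mul_pos hc (by linarith)) (2 + 2 * c)
  refine ⟨r, n + 2, hr, fun x hx => ?_⟩
  by_contra! hflat
  have hx0 : 0 < x := hr.trans hx
  have htel : deriv κ (2 ^ (n + 2) * x) ≤ deriv κ x + (n + 1 + 1) := by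
    exact_mod_cast le_add_of_forall_Icc_sub_le_one hx0 hflat
  set S := κ (2 * x) / (2 * x)
  have hup : deriv κ x ≤ 2 * S := by
    calc deriv κ x ≤ κ (2 * x) / x :=
          hconv.deriv_le_div_two_mul hx0 (hdiff x) (hpos x (by linarith)).le
      _ = 2 * S := by unfold S; field_simp
  have hlow : (K0 - 1) * ((K0 / 2) ^ n * S) ≤ deriv κ (2 ^ (n + 2) * x) := by
    have := hconv.sub_one_mul_half_pow_mul_div_le_deriv hdiff (by linarith) hθ0 hgrow
      (θ := 2 * x) (by linarith) n
    rwa [show (2 : ℝ) ^ (n + 1) * (2 * x) = 2 ^ (n + 2) * x by ring] at this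
  have hcS : c ≤ S :=
    (hconv.subset (subset_univ _) (convex_Ici 0)).div_le_div_of_map_zero h0 hr (by linarith)
  have hgap : 0 ≤ (K0 - 1) * (K0 / 2) ^ n - 2 := by nlinarith
  nlinarith [mul_le_mul_of_nonneg_right hcS hgap]

/-- If `κ` is even, convex, differentiable, `κ(0) = 0`,
`κ > 0` beyond `θ0`, and `K0 κ(θ) ≤ κ(2θ)` for `θ > θ0` with `K0 > 2`, then
there exist `θ0' > 0` and `m0 ∈ ℕ` such that every `θ1 > θ0'` admits
`θ* ∈ [θ1, 2^{m0-1} θ1]` with `μ(2θ*) - μ(θ*) > 1`, where `μ = κ'`. -/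
theorem stmt12 (θ0 K0 : ℝ) (hθ0 : 0 < θ0) (hK0 : 2 < K0)
    (κ : ℝ → ℝ) (heven : ∀ θ : ℝ, κ (-θ) = κ θ)
    (hconv : ConvexOn ℝ Set.univ κ) (hdiff : Differentiable ℝ κ)
    (h0 : κ 0 = 0) (hpos : ∀ θ : ℝ, θ0 < θ → 0 < κ θ)
    (hgrow : ∀ θ : ℝ, θ0 < θ → K0 * κ θ ≤ κ (2 * θ)) :
    ∃ (θ0' : ℝ) (m0 : ℕ), 0 < θ0' ∧
      ∀ θ1 : ℝ, θ0' < θ1 →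
        ∃ θs ∈ Set.Icc θ1 ((2 : ℝ) ^ (m0 - 1) * θ1),
          1 < deriv κ (2 * θs) - deriv κ θs :=
  stmt12_general θ0 K0 hK0 κ hconv hdiff h0 hpos hgrow
end
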